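/- arXiv:1111.4504 — 3 statements merged into one kernel-verified Lean document; each statement's English description precedes it below -/
import Mathlib

section
/- The set *Cⁱ := {x ∈ E : f_i(x) − g_i(x) ≥ 0} belongs to B and maximizes ψ over all measurable stopping sets: ψ(*Cⁱ) = sup_{Cⁱ ∈ B} ψ(Cⁱ). -/
open Set MeasureTheory

/-- The set-valued aggregate of `π` on events `D¹,…,Dᵖ`:
`Π(D¹,…,Dᵖ) = {ω : π(1_{D¹}(ω),…,1_{Dᵖ}(ω)) = 1}`. -/
def aggEvent {Ω : Type*} {p : ℕ} (π : (Fin p → ℤ) → ℤ) (D : Fin p → Set Ω) : Set Ω :=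
  {ω | π (fun j => (D j).indicator 1 ω) = 1}

lemma aggEvent_measurableSet {Ω : Type*} [MeasurableSpace Ω] {p : ℕ}
    (π : (Fin p → ℤ) → ℤ) (D : Fin p → Set Ω) (hD : ∀ j, MeasurableSet (D j)) :
    MeasurableSet (aggEvent π D) := by
  have hmeas : Measurable (fun ω => fun j => (D j).indicator (1 : Ω → ℤ) ω) :=
    measurable_pi_lambda _ fun j => measurable_one.indicator (hD j)
  have heq : aggEvent π D
      = (fun ω => fun j => (D j).indicator (1 : Ω → ℤ) ω) ⁻¹' {v | π v = 1} := rfl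
  rw [heq]
  exact hmeas ((Set.to_countable _).measurableSet)

lemma aggEvent_mono_mem {Ω : Type*} {p : ℕ} (π : (Fin p → ℤ) → ℤ)
    (hπ01 : ∀ b : Fin p → ℤ, (∀ j, b j = 0 ∨ b j = 1) → π b = 0 ∨ π b = 1)
    (hπmono : ∀ b c : Fin p → ℤ, (∀ j, b j = 0 ∨ b j = 1) → (∀ j, c j = 0 ∨ c j = 1) →
      (∀ j, b j ≤ c j) → π b ≤ π c)
    (D D' : Fin p → Set Ω) (ω : Ω) (h : ∀ j, ω ∈ D j → ω ∈ D' j)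
    (hω : ω ∈ aggEvent π D) : ω ∈ aggEvent π D' := by
  set b := fun j => (D j).indicator (1 : Ω → ℤ) ω with hb
  set c := fun j => (D' j).indicator (1 : Ω → ℤ) ω with hcdef
  have hb01 : ∀ j, b j = 0 ∨ b j = 1 := fun j => by
    by_cases hj : ω ∈ D j <;> simp [hb, hj]
  have hc01 : ∀ j, c j = 0 ∨ c j = 1 := fun j => by
    by_cases hj : ω ∈ D' j <;> simp [hcdef, hj]
  have hbc : ∀ j, b j ≤ c j := fun j => by
    by_cases hj : ω ∈ D j
    · simp [hb, hcdef, hj, h j hj]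
    · rcases hc01 j with h0 | h1 <;> simp [hb, hj] <;> omega
  have hmono := hπmono b c hb01 hc01 hbc
  have h1 : π b = 1 := hω
  rcases hπ01 c hc01 with h0 | h1' <;> [omega; exact h1']

/-- With `ψ(Cⁱ) = E_x[f_i(X₁) 1_{ⁱD₁({X₁∈Cⁱ})} + g_i(X₁) 1_{(ⁱD₁({X₁∈Cⁱ}))ᶜ}]`,
where `ⁱD₁(A) = Π(D₁¹,…,A,…,D₁ᵖ)` with `D₁ʲ = {X₁ ∈ Cʲ}` fixed for `j ≠ i`, the set
`*Cⁱ := {x ∈ E : f_i(x) − g_i(x) ≥ 0}` is measurable and maximizes `ψ` over all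
measurable stopping sets: `ψ(*Cⁱ) = sup_{Cⁱ ∈ B} ψ(Cⁱ)`. -/
theorem optimal_stopping_set {Ω E : Type*} [MeasurableSpace Ω] [MeasurableSpace E]
    (P : Measure Ω) [IsProbabilityMeasure P]
    (X : Ω → E) (hX : Measurable X)
    (p : ℕ) (i : Fin p)
    (f g : E → ℝ) (hf : Measurable f) (hg : Measurable g)
    (hfint : Integrable (fun ω => f (X ω)) P)
    (hgint : Integrable (fun ω => g (X ω)) P)
    (π : (Fin p → ℤ) → ℤ)
    (hπ01 : ∀ b : Fin p → ℤ, (∀ j, b j = 0 ∨ b j = 1) → π b = 0 ∨ π b = 1)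
    (hπmono : ∀ b c : Fin p → ℤ, (∀ j, b j = 0 ∨ b j = 1) → (∀ j, c j = 0 ∨ c j = 1) →
      (∀ j, b j ≤ c j) → π b ≤ π c)
    (C : Fin p → Set E) (hC : ∀ j, j ≠ i → MeasurableSet (C j))
    (ψ : Set E → ℝ)
    (hψ : ∀ Ci : Set E, ψ Ci =
      ∫ ω, (aggEvent π (Function.update (fun j => X ⁻¹' (C j)) i (X ⁻¹' Ci))).indicator
              (fun ω' => f (X ω')) ω
          + ((aggEvent π (Function.update (fun j => X ⁻¹' (C j)) i (X ⁻¹' Ci)))ᶜ).indicator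
              (fun ω' => g (X ω')) ω ∂P) :
    MeasurableSet {x : E | 0 ≤ f x - g x}
      ∧ IsGreatest {y : ℝ | ∃ Ci : Set E, MeasurableSet Ci ∧ ψ Ci = y}
          (ψ {x : E | 0 ≤ f x - g x}) := by
  set Cstar : Set E := {x : E | 0 ≤ f x - g x} with hCstar
  have hCm : MeasurableSet Cstar := by
    have heq : Cstar = {x | g x ≤ f x} := by
      ext x; simp [hCstar, sub_nonneg]
    rw [heq]; exact measurableSet_le hg hf
  -- measurability of the aggregate event, for any measurable stopping set
  have haggmeas : ∀ Ci : Set E, MeasurableSet Ci →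
      MeasurableSet (aggEvent π (Function.update (fun j => X ⁻¹' (C j)) i (X ⁻¹' Ci))) := by
    intro Ci hCi
    apply aggEvent_measurableSet
    intro j
    rcases eq_or_ne j i with rfl | hji
    · simpa using hX hCi
    · rw [Function.update_of_ne hji]
      exact hX (hC j hji)
  -- integrability of the integrand
  have hint : ∀ Ci : Set E, MeasurableSet Ci →
      Integrable (fun ω =>
        (aggEvent π (Function.update (fun j => X ⁻¹' (C j)) i (X ⁻¹' Ci))).indicator
            (fun ω' => f (X ω')) ω
        + ((aggEvent π (Function.update (fun j => X ⁻¹' (C j)) i (X ⁻¹' Ci)))ᶜ).indicator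
            (fun ω' => g (X ω')) ω) P := by
    intro Ci hCi
    exact (hfint.indicator (haggmeas Ci hCi)).add (hgint.indicator (haggmeas Ci hCi).compl)
  refine ⟨hCm, ⟨Cstar, hCm, rfl⟩, ?_⟩
  rintro y ⟨Ci, hCi, rfl⟩
  rw [hψ Ci, hψ Cstar]
  apply integral_mono (hint Ci hCi) (hint Cstar hCm)
  intro ω
  dsimp only
  set DCi := Function.update (fun j => X ⁻¹' (C j)) i (X ⁻¹' Ci) with hDCi
  set Dst := Function.update (fun j => X ⁻¹' (C j)) i (X ⁻¹' Cstar) with hDst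
  by_cases hs : 0 ≤ f (X ω) - g (X ω)
  · -- X ω ∈ Cstar : pointwise, DCi j ⊆ Dst j at ω
    have hsub : ∀ j, ω ∈ DCi j → ω ∈ Dst j := by
      intro j hj
      rcases eq_or_ne j i with rfl | hji
      · rw [hDst, Function.update_self]
        exact hs
      · rw [hDCi, Function.update_of_ne hji] at hj
        rw [hDst, Function.update_of_ne hji]
        exact hj
    by_cases ht : ω ∈ aggEvent π Dst
    · have : ω ∉ (aggEvent π Dst)ᶜ := by simpa using ht
      rw [Set.indicator_of_mem ht, Set.indicator_of_notMem this]
      by_cases hti : ω ∈ aggEvent π DCi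
      · have : ω ∉ (aggEvent π DCi)ᶜ := by simpa using hti
        rw [Set.indicator_of_mem hti, Set.indicator_of_notMem this]
      · have h2 : ω ∈ (aggEvent π DCi)ᶜ := by simpa using hti
        rw [Set.indicator_of_notMem hti, Set.indicator_of_mem h2]
        linarith
    · have hti : ω ∉ aggEvent π DCi := fun h =>
        ht (aggEvent_mono_mem π hπ01 hπmono DCi Dst ω hsub h)
      have h2 : ω ∈ (aggEvent π DCi)ᶜ := by simpa using hti
      have h3 : ω ∈ (aggEvent π Dst)ᶜ := by simpa using ht
      rw [Set.indicator_of_notMem hti, Set.indicator_of_mem h2,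
        Set.indicator_of_notMem ht, Set.indicator_of_mem h3]
  · -- X ω ∉ Cstar : pointwise, Dst j ⊆ DCi j at ω
    have hsub : ∀ j, ω ∈ Dst j → ω ∈ DCi j := by
      intro j hj
      rcases eq_or_ne j i with rfl | hji
      · rw [hDst, Function.update_self] at hj
        exact absurd hj hs
      · rw [hDst, Function.update_of_ne hji] at hj
        rw [hDCi, Function.update_of_ne hji]
        exact hj
    by_cases ht : ω ∈ aggEvent π Dst
    · have hti : ω ∈ aggEvent π DCi :=
        aggEvent_mono_mem π hπ01 hπmono Dst DCi ω hsub ht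
      have h2 : ω ∉ (aggEvent π DCi)ᶜ := by simpa using hti
      have h3 : ω ∉ (aggEvent π Dst)ᶜ := by simpa using ht
      rw [Set.indicator_of_mem hti, Set.indicator_of_notMem h2,
        Set.indicator_of_mem ht, Set.indicator_of_notMem h3]
    · have h3 : ω ∈ (aggEvent π Dst)ᶜ := by simpa using ht
      rw [Set.indicator_of_notMem ht, Set.indicator_of_mem h3]
      by_cases hti : ω ∈ aggEvent π DCi
      · have h2 : ω ∉ (aggEvent π DCi)ᶜ := by simpa using hti
        rw [Set.indicator_of_mem hti, Set.indicator_of_notMem h2]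
        linarith
      · have h2 : ω ∈ (aggEvent π DCi)ᶜ := by simpa using hti
        rw [Set.indicator_of_notMem hti, Set.indicator_of_mem h2]
end

section
/- With *Cⁱ := {x ∈ E : f_i(x) − g_i(x) ≥ 0}, the maximal value admits the representation ψ(*Cⁱ) = E_x[(f_i(X₁) − g_i(X₁))⁺ 1_{ⁱD₁(Ω)}] − E_x[(f_i(X₁) − g_i(X₁))⁻ 1_{ⁱD₁(∅)}] + E_x[g_i(X₁)], where a⁺ = max{a, 0} and a⁻ = max{−a, 0}. -/
open Set MeasureTheory

/-- With `*Cⁱ := {x : f_i(x) − g_i(x) ≥ 0}`, the maximal value admits the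
representation
`ψ(*Cⁱ) = E_x[(f_i(X₁) − g_i(X₁))⁺ 1_{ⁱD₁(Ω)}] − E_x[(f_i(X₁) − g_i(X₁))⁻ 1_{ⁱD₁(∅)}]
  + E_x[g_i(X₁)]`, where `a⁺ = max{a,0}` and `a⁻ = max{−a,0}`. -/
theorem optimal_stopping_value {Ω E : Type*} [MeasurableSpace Ω] [MeasurableSpace E]
    (P : Measure Ω) [IsProbabilityMeasure P]
    (X : Ω → E) (hX : Measurable X)
    (p : ℕ) (i : Fin p)
    (f g : E → ℝ) (hf : Measurable f) (hg : Measurable g)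
    (hfint : Integrable (fun ω => f (X ω)) P)
    (hgint : Integrable (fun ω => g (X ω)) P)
    (π : (Fin p → ℤ) → ℤ)
    (hπ01 : ∀ b : Fin p → ℤ, (∀ j, b j = 0 ∨ b j = 1) → π b = 0 ∨ π b = 1)
    (hπmono : ∀ b c : Fin p → ℤ, (∀ j, b j = 0 ∨ b j = 1) → (∀ j, c j = 0 ∨ c j = 1) →
      (∀ j, b j ≤ c j) → π b ≤ π c)
    (C : Fin p → Set E) (hC : ∀ j, j ≠ i → MeasurableSet (C j))
    (ψ : Set E → ℝ)
    (hψ : ∀ Ci : Set E, ψ Ci =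
      ∫ ω, (aggEvent π (Function.update (fun j => X ⁻¹' (C j)) i (X ⁻¹' Ci))).indicator
              (fun ω' => f (X ω')) ω
          + ((aggEvent π (Function.update (fun j => X ⁻¹' (C j)) i (X ⁻¹' Ci)))ᶜ).indicator
              (fun ω' => g (X ω')) ω ∂P) :
    ψ {x : E | 0 ≤ f x - g x}
      = (∫ ω in aggEvent π (Function.update (fun j => X ⁻¹' (C j)) i (Set.univ : Set Ω)),
            max (f (X ω) - g (X ω)) 0 ∂P)
        - (∫ ω in aggEvent π (Function.update (fun j => X ⁻¹' (C j)) i (∅ : Set Ω)),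
            max (-(f (X ω) - g (X ω))) 0 ∂P)
        + ∫ ω, g (X ω) ∂P := by
  classical
  set Cs : Set E := {x : E | 0 ≤ f x - g x} with hCs
  set D : Fin p → Set Ω := fun j => X ⁻¹' (C j) with hDdef
  set A : Set Ω → Set Ω := fun s => aggEvent π (Function.update D i s) with hAdef
  -- membership transfer
  have hmemA : ∀ (s t : Set Ω) (ω : Ω), (ω ∈ s ↔ ω ∈ t) → (ω ∈ A s ↔ ω ∈ A t) := by
    intro s t ω hst
    have hfun : (fun j => (Function.update D i s j).indicator (1 : Ω → ℤ) ω)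
        = (fun j => (Function.update D i t j).indicator (1 : Ω → ℤ) ω) := by
      funext j
      by_cases hj : j = i
      · subst hj
        simp only [Function.update_self, Set.indicator_apply]
        by_cases hω : ω ∈ s
        · rw [if_pos hω, if_pos (hst.mp hω)]
        · rw [if_neg hω, if_neg (fun h => hω (hst.mpr h))]
      · simp [Function.update_of_ne hj]
    simp only [hAdef, aggEvent, Set.mem_setOf_eq, hfun]
  -- measurability
  have hAmeas : ∀ s : Set Ω, MeasurableSet s → MeasurableSet (A s) := by
    intro s hs
    have hv : Measurable (fun ω j => (Function.update D i s j).indicator (1 : Ω → ℤ) ω) := by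
      rw [measurable_pi_iff]
      intro j
      by_cases hj : j = i
      · subst hj
        simpa [Function.update_self] using
          (measurable_one.indicator hs : Measurable (s.indicator (1 : Ω → ℤ)))
      · simp only [Function.update_of_ne hj]
        exact measurable_one.indicator (hX (hC j hj))
    have hπm : Measurable π := measurable_of_countable π
    have : A s = (fun ω => π (fun j => (Function.update D i s j).indicator 1 ω)) ⁻¹' {1} := rfl
    rw [this]
    exact (hπm.comp hv) (measurableSet_singleton 1)
  -- pointwise identity
  have hpt : ∀ ω : Ω,
      (A (X ⁻¹' Cs)).indicator (fun ω' => f (X ω')) ω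
        + ((A (X ⁻¹' Cs))ᶜ).indicator (fun ω' => g (X ω')) ω
      = (A (Set.univ : Set Ω)).indicator (fun ω' => max (f (X ω') - g (X ω')) 0) ω
        - (A (∅ : Set Ω)).indicator (fun ω' => max (-(f (X ω') - g (X ω'))) 0) ω
        + g (X ω) := by
    intro ω
    by_cases hc : 0 ≤ f (X ω) - g (X ω)
    · have h1 : (ω ∈ A (X ⁻¹' Cs)) ↔ (ω ∈ A (Set.univ : Set Ω)) :=
        hmemA _ _ ω (by simp [hCs]; linarith)
      have e0 : (A (∅ : Set Ω)).indicator (fun ω' => max (-(f (X ω') - g (X ω'))) 0) ω = 0 := by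
        by_cases h0 : ω ∈ A (∅ : Set Ω)
        · rw [Set.indicator_of_mem h0]; exact max_eq_right (by linarith)
        · exact Set.indicator_of_notMem h0 _
      rw [e0]
      by_cases hm : ω ∈ A (Set.univ : Set Ω)
      · rw [Set.indicator_of_mem (h1.mpr hm), Set.indicator_of_mem hm,
          Set.indicator_of_notMem (show ω ∉ (A (X ⁻¹' Cs))ᶜ from fun h => h (h1.mpr hm)),
          max_eq_left hc]
        ring
      · rw [Set.indicator_of_notMem hm,
          Set.indicator_of_notMem (fun h => hm (h1.mp h)),
          Set.indicator_of_mem (show ω ∈ (A (X ⁻¹' Cs))ᶜ from fun h => hm (h1.mp h))]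
        ring
    · have h1 : (ω ∈ A (X ⁻¹' Cs)) ↔ (ω ∈ A (∅ : Set Ω)) :=
        hmemA _ _ ω (by simp [hCs]; linarith)
      have e0 : (A (Set.univ : Set Ω)).indicator
          (fun ω' => max (f (X ω') - g (X ω')) 0) ω = 0 := by
        by_cases h0 : ω ∈ A (Set.univ : Set Ω)
        · rw [Set.indicator_of_mem h0]; exact max_eq_right (by linarith)
        · exact Set.indicator_of_notMem h0 _
      rw [e0]
      by_cases hm : ω ∈ A (∅ : Set Ω)
      · rw [Set.indicator_of_mem (h1.mpr hm), Set.indicator_of_mem hm,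
          Set.indicator_of_notMem (show ω ∉ (A (X ⁻¹' Cs))ᶜ from fun h => h (h1.mpr hm)),
          max_eq_left (by linarith : 0 ≤ -(f (X ω) - g (X ω)))]
        ring
      · rw [Set.indicator_of_notMem hm,
          Set.indicator_of_notMem (fun h => hm (h1.mp h)),
          Set.indicator_of_mem (show ω ∈ (A (X ⁻¹' Cs))ᶜ from fun h => hm (h1.mp h))]
        ring
  -- integrability
  have hsubint : Integrable (fun ω => f (X ω) - g (X ω)) P := hfint.sub hgint
  have hsubint' : Integrable (fun ω => -(f (X ω) - g (X ω))) P := hsubint.neg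
  have hmaxint : Integrable (fun ω => max (f (X ω) - g (X ω)) 0) P := hsubint.pos_part
  have hmaxint' : Integrable (fun ω => max (-(f (X ω) - g (X ω))) 0) P := hsubint'.pos_part
  have hint1 : Integrable
      ((A (Set.univ : Set Ω)).indicator (fun ω => max (f (X ω) - g (X ω)) 0)) P :=
    hmaxint.indicator (hAmeas _ MeasurableSet.univ)
  have hint2 : Integrable
      ((A (∅ : Set Ω)).indicator (fun ω => max (-(f (X ω) - g (X ω))) 0)) P :=
    hmaxint'.indicator (hAmeas _ MeasurableSet.empty)
  rw [hψ Cs]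
  have : (∫ ω, (aggEvent π (Function.update (fun j => X ⁻¹' (C j)) i (X ⁻¹' Cs))).indicator
              (fun ω' => f (X ω')) ω
          + ((aggEvent π (Function.update (fun j => X ⁻¹' (C j)) i (X ⁻¹' Cs)))ᶜ).indicator
              (fun ω' => g (X ω')) ω ∂P)
      = ∫ ω, ((A (Set.univ : Set Ω)).indicator (fun ω' => max (f (X ω') - g (X ω')) 0) ω
          - (A (∅ : Set Ω)).indicator (fun ω' => max (-(f (X ω') - g (X ω'))) 0) ω
          + g (X ω)) ∂P := by
    apply integral_congr_ae
    exact Filter.Eventually.of_forall hpt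
  have hdiffint : Integrable (fun ω =>
      (A (Set.univ : Set Ω)).indicator (fun ω' => max (f (X ω') - g (X ω')) 0) ω
      - (A (∅ : Set Ω)).indicator (fun ω' => max (-(f (X ω') - g (X ω'))) 0) ω) P :=
    hint1.sub hint2
  rw [this, integral_add hdiffint hgint, integral_sub hint1 hint2,
    integral_indicator (hAmeas _ MeasurableSet.univ),
    integral_indicator (hAmeas _ MeasurableSet.empty)]
end

section
/- Suppose the process is not stopped before moment n, all players use the equilibrium strategies *σ_k^j at moments k = n+1,…,N, players j ≠ i use *σ_n^j at moment n, and player i uses at moment n the strategy given by a stopping set Cⁱ ∈ B, with expected payoff φ_{N−n}(X_{n−1}, Cⁱ) = E_{X_{n−1}}[f_i(X_n) 1_{ⁱ*D_n(D_n^i)} + v_{i,N−n}(X_n) 1_{(ⁱ*D_n(D_n^i))ᶜ}], where D_n^i = {X_n ∈ Cⁱ}. Then φ_{N−n}(X_{n−1}, ·) attains its maximum over Cⁱ ∈ B at *C_n^i = {x ∈ E : f_i(x) − v_{i,N−n}(x) ≥ 0}, and P_x-a.e. v_{i,N−n+1}(X_{n−1}) = E_x[(f_i(X_n) − v_{i,N−n}(X_n))⁺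 1_{ⁱ*D_n(Ω)} | F_{n−1}] − E_x[(f_i(X_n) − v_{i,N−n}(X_n))⁻ 1_{ⁱ*D_n(∅)} | F_{n−1}] + E_x[v_{i,N−n}(X_n) | F_{n−1}]. -/
open Set MeasureTheory Filter

/-- The σ-field on path space generated by the coordinates `0,…,n` (the natural
filtration `F_n = σ(X₀,…,X_n)` of the coordinate process). -/
def pathFiltration (E : Type*) [MeasurableSpace E] (n : ℕ) : MeasurableSpace (ℕ → E) :=
  MeasurableSpace.comap (fun ω (k : Fin (n + 1)) => ω (k : ℕ)) inferInstance

/-- The effective stopping time `t_π(σ) = inf {n ≥ 1 : π(σ_n^1,…,σ_n^p) = 1}`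
(`inf ∅ = ∞`) generated by the stopping strategy `σ` and the aggregate function `π`. -/
noncomputable def stopTime {Ω : Type*} {p : ℕ} (π : (Fin p → ℤ) → ℤ)
    (σ : Fin p → ℕ → Ω → ℤ) (ω : Ω) : ℕ∞ :=
  sInf {m : ℕ∞ | ∃ n : ℕ, m = (n : ℕ∞) ∧ 1 ≤ n ∧ π (fun i => σ i n ω) = 1}

/-- The value `h(X_{t(ω)})` of `h` at the stopped coordinate process, with the
convention `h(X_∞) = limsup_n h(X_n)`. -/
noncomputable def stopped {E : Type*} (h : E → ℝ) (t : (ℕ → E) → ℕ∞) (ω : ℕ → E) : ℝ :=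
  if t ω = ⊤ then limsup (fun n => h (ω n)) atTop else h (ω (t ω).toNat)

/-- A time-homogeneous Markov chain family on path space: for every initial state `x` a
probability law `P x` of the chain `(X_n)` with `X₀ = x`; conditionally on `F_n`,
the shifted path has law `P (X_n)` (time-homogeneous Markov property). -/
structure MarkovFamily (E : Type*) [MeasurableSpace E] where
  P : E → Measure (ℕ → E)
  prob : ∀ x, IsProbabilityMeasure (P x)
  init : ∀ x, P x {ω | ω 0 = x} = 1
  markov : ∀ (x : E) (n : ℕ) (A : Set (ℕ → E)), MeasurableSet[pathFiltration E n] A →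
    ∀ g : (ℕ → E) → ℝ, Measurable g → (∀ ω, |g ω| ≤ 1) →
      ∫ ω in A, g (fun k => ω (n + k)) ∂(P x)
        = ∫ ω in A, (∫ ω', g ω' ∂(P (ω n))) ∂(P x)

section AuxLemmas
variable {E : Type*} [MeasurableSpace E]

lemma pathFiltration_le (m : ℕ) : pathFiltration E m ≤ (inferInstance : MeasurableSpace (ℕ → E)) :=
  Measurable.comap_le (measurable_pi_lambda _ fun _ => measurable_pi_apply _)

lemma measurable_coord_pathFiltration {m k : ℕ} (hk : k ≤ m) :
    Measurable[pathFiltration E m] (fun ω : ℕ → E => ω k) := by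
  have h : (fun ω : ℕ → E => ω k)
      = (fun v : Fin (m+1) → E => v ⟨k, Nat.lt_succ_of_le hk⟩)
        ∘ (fun ω (j : Fin (m+1)) => ω (j : ℕ)) := rfl
  rw [h]
  exact (measurable_pi_apply _).comp (measurable_iff_comap_le.mpr le_rfl)

lemma measurableSet_aggEvent {Ω : Type*} [MeasurableSpace Ω] {p : ℕ} (π : (Fin p → ℤ) → ℤ)
    {D : Fin p → Set Ω} (hD : ∀ j, MeasurableSet (D j)) : MeasurableSet (aggEvent π D) := by
  have hΦ : Measurable fun ω => fun j => (D j).indicator (1 : Ω → ℤ) ω :=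
    measurable_pi_lambda _ fun j => measurable_const.indicator (hD j)
  exact hΦ ((Set.to_countable {b : Fin p → ℤ | π b = 1}).measurableSet)

variable {E : Type*} [MeasurableSpace E] (M : MarkovFamily E)

lemma MarkovFamily.int_of_bounded {g : (ℕ → E) → ℝ} (hg : Measurable g) {C : ℝ}
    (hb : ∀ ω, |g ω| ≤ C) (y : E) : Integrable g (M.P y) := by
  haveI := M.prob y
  exact (integrable_const C).mono' hg.aestronglyMeasurable
    (Eventually.of_forall fun ω => by simpa using hb ω)

lemma MarkovFamily.markov_scaled (x : E) (m : ℕ) (A : Set (ℕ → E))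
    (hA : MeasurableSet[pathFiltration E m] A) (g : (ℕ → E) → ℝ) (hg : Measurable g)
    {C : ℝ} (hC : 0 < C) (hb : ∀ ω, |g ω| ≤ C) :
    ∫ ω in A, g (fun k => ω (m + k)) ∂(M.P x)
      = ∫ ω in A, (∫ ω', g ω' ∂(M.P (ω m))) ∂(M.P x) := by
  have h := M.markov x m A hA (fun ω => C⁻¹ * g ω) (hg.const_mul _)
    (fun ω => by
      rw [abs_mul, abs_inv, abs_of_pos hC, inv_mul_le_iff₀ hC, mul_one]
      exact hb ω)
  simp only [integral_const_mul] at h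
  exact mul_left_cancel₀ (inv_ne_zero hC.ne') h

lemma MarkovFamily.markov_scaled_univ (x : E) (m : ℕ) (g : (ℕ → E) → ℝ) (hg : Measurable g)
    {C : ℝ} (hC : 0 < C) (hb : ∀ ω, |g ω| ≤ C) :
    ∫ ω, g (fun k => ω (m + k)) ∂(M.P x)
      = ∫ ω, (∫ ω', g ω' ∂(M.P (ω m))) ∂(M.P x) := by
  have := M.markov_scaled x m Set.univ MeasurableSet.univ g hg hC hb
  simpa using this

lemma MarkovFamily.aesm_kernel_one (x : E) (m : ℕ) (g : (ℕ → E) → ℝ) (hg : Measurable g)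
    (hb : ∀ ω, |g ω| ≤ 1) :
    AEStronglyMeasurable (fun ω => ∫ ω', g ω' ∂(M.P (ω m))) (M.P x) := by
  haveI := M.prob x
  by_contra hc
  set g2 : (ℕ → E) → ℝ := fun ω => (1 - g ω) / 2 with hg2def
  have hg2 : Measurable g2 := (measurable_const.sub hg).div_const 2
  have hb2 : ∀ ω, |g2 ω| ≤ 1 := fun ω => by
    rw [hg2def]
    simp only [abs_div]
    rw [div_le_iff₀ (by norm_num : (0:ℝ) < |(2:ℝ)|)]
    have := abs_le.mp (hb ω)
    rw [abs_le]
    constructor <;> [skip; skip] <;> nlinarith [abs_nonneg (2:ℝ), abs_of_pos (show (0:ℝ) < 2 by norm_num)]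
  have hker2 : ∀ y : E, (∫ ω', g2 ω' ∂(M.P y)) = (1 - ∫ ω', g ω' ∂(M.P y)) / 2 := by
    intro y
    haveI := M.prob y
    rw [hg2def]
    simp only
    rw [integral_div, integral_sub (integrable_const 1) (M.int_of_bounded hg hb y),
      integral_const]
    simp
  have hc2 : ¬ AEStronglyMeasurable (fun ω => ∫ ω', g2 ω' ∂(M.P (ω m))) (M.P x) := by
    intro h
    apply hc
    have : (fun ω : ℕ → E => ∫ ω', g ω' ∂(M.P (ω m)))
        = fun ω : ℕ → E => 1 - 2 * (∫ ω', g2 ω' ∂(M.P (ω m))) := by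
      funext ω; rw [hker2]; ring
    rw [this]
    exact aestronglyMeasurable_const.sub (h.const_mul 2)
  have hni : ¬ Integrable (fun ω => ∫ ω', g ω' ∂(M.P (ω m))) (M.P x) :=
    fun h => hc h.aestronglyMeasurable
  have hni2 : ¬ Integrable (fun ω => ∫ ω', g2 ω' ∂(M.P (ω m))) (M.P x) :=
    fun h => hc2 h.aestronglyMeasurable
  have hz : (∫ ω, (∫ ω', g ω' ∂(M.P (ω m))) ∂(M.P x)) = 0 := integral_undef hni
  have hz2 : (∫ ω, (∫ ω', g2 ω' ∂(M.P (ω m))) ∂(M.P x)) = 0 := integral_undef hni2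
  have e1 : (∫ ω, g (fun k => ω (m + k)) ∂(M.P x)) = 0 := by
    rw [M.markov_scaled_univ x m g hg one_pos hb, hz]
  have e2 : (∫ ω, g2 (fun k => ω (m + k)) ∂(M.P x)) = 0 := by
    rw [M.markov_scaled_univ x m g2 hg2 one_pos hb2, hz2]
  have hgθ : Integrable (fun ω => g (fun k => ω (m + k))) (M.P x) := by
    have : Measurable fun ω : ℕ → E => (fun k => ω (m + k)) :=
      measurable_pi_lambda _ fun _ => measurable_pi_apply _
    exact (integrable_const 1).mono' (hg.comp this).aestronglyMeasurable
      (Eventually.of_forall fun ω => by simpa using hb _)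
  have : (∫ ω, g2 (fun k => ω (m + k)) ∂(M.P x)) = 1/2 := by
    rw [hg2def]
    simp only
    rw [integral_div, integral_sub (integrable_const 1) hgθ, integral_const, e1]
    simp
  rw [e2] at this
  norm_num at this

lemma MarkovFamily.aesm_kernel (x : E) (m : ℕ) (g : (ℕ → E) → ℝ) (hg : Measurable g)
    {C : ℝ} (hC : 0 < C) (hb : ∀ ω, |g ω| ≤ C) :
    AEStronglyMeasurable (fun ω => ∫ ω', g ω' ∂(M.P (ω m))) (M.P x) := by
  have h1 : ∀ ω, |C⁻¹ * g ω| ≤ 1 := fun ω => by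
    rw [abs_mul, abs_inv, abs_of_pos hC, inv_mul_le_iff₀ hC, mul_one]; exact hb ω
  have := (M.aesm_kernel_one x m (fun ω => C⁻¹ * g ω) (hg.const_mul _) h1).const_mul C
  have heq : (fun ω : ℕ → E => C * ∫ ω', C⁻¹ * g ω' ∂(M.P (ω m)))
      = fun ω : ℕ → E => ∫ ω', g ω' ∂(M.P (ω m)) := by
    funext ω
    rw [integral_const_mul, ← mul_assoc, mul_inv_cancel₀ hC.ne', one_mul]
  rwa [heq] at this

lemma MarkovFamily.measurable_shift (m : ℕ) :
    Measurable fun ω : ℕ → E => (fun k => ω (m + k)) :=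
  measurable_pi_lambda _ fun _ => measurable_pi_apply _

lemma MarkovFamily.markov_nonneg (x : E) (m : ℕ) (g : (ℕ → E) → ℝ) (hg : Measurable g)
    (h0 : ∀ ω, 0 ≤ g ω) (hint : ∀ y, Integrable g (M.P y))
    (hintθ : Integrable (fun ω => g (fun k => ω (m + k))) (M.P x)) :
    Integrable (fun ω : ℕ → E => ∫ ω', g ω' ∂(M.P (ω m))) (M.P x)
    ∧ ∀ A : Set (ℕ → E), MeasurableSet[pathFiltration E m] A →
      ∫ ω in A, g (fun k => ω (m + k)) ∂(M.P x)
        = ∫ ω in A, (∫ ω', g ω' ∂(M.P (ω m))) ∂(M.P x) := by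
  haveI := M.prob x
  set gk : ℕ → (ℕ → E) → ℝ := fun k ω => min (g ω) (k + 1) with hgkdef
  have hgkmeas : ∀ k, Measurable (gk k) := fun k => hg.min measurable_const
  have hgkpos : ∀ k : ℕ, (0:ℝ) < (k:ℝ) + 1 := fun k => by positivity
  have hgkb : ∀ (k : ℕ) ω, |gk k ω| ≤ (k:ℝ) + 1 := fun k ω => by
    rw [abs_le]
    constructor
    · have := h0 ω; have := (hgkpos k).le
      simp only [hgkdef, le_min_iff]
      constructor <;> linarith
    · exact min_le_right _ _
  have hgkmono : ∀ ω, Monotone fun k => gk k ω := fun ω k l hkl =>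
    min_le_min le_rfl (by exact_mod_cast add_le_add (Nat.cast_le.2 hkl) le_rfl)
  have hgktend : ∀ ω, Tendsto (fun k => gk k ω) atTop (nhds (g ω)) := by
    intro ω
    apply tendsto_atTop_of_eventually_const (i₀ := ⌈g ω⌉₊)
    intro k hk
    exact min_eq_left (le_trans (Nat.le_ceil _)
      (le_trans (by exact_mod_cast Nat.cast_le.2 hk) (by linarith [hgkpos k])))
  -- kernel integrals of the truncations
  set κk : ℕ → (ℕ → E) → ℝ := fun k ω => ∫ ω', gk k ω' ∂(M.P (ω m)) with hκkdef
  set κ : (ℕ → E) → ℝ := fun ω => ∫ ω', g ω' ∂(M.P (ω m)) with hκdef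
  have hκkaesm : ∀ k, AEStronglyMeasurable (κk k) (M.P x) := fun k =>
    M.aesm_kernel x m (gk k) (hgkmeas k) (hgkpos k) (hgkb k)
  have hκkb : ∀ (k : ℕ) ω, ‖κk k ω‖ ≤ (k:ℝ) + 1 := by
    intro k ω
    haveI := M.prob (ω m)
    calc ‖κk k ω‖ ≤ ((k:ℝ) + 1) * ((M.P (ω m)) Set.univ).toReal :=
          norm_integral_le_of_norm_le_const
            (Eventually.of_forall fun ω' => by
              rw [Real.norm_eq_abs]; exact hgkb k ω')
      _ = (k:ℝ) + 1 := by simp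
  have hκkint : ∀ k, Integrable (κk k) (M.P x) := fun k =>
    (integrable_const ((k:ℝ)+1)).mono' (hκkaesm k) (Eventually.of_forall (hκkb k))
  have hκkmono : ∀ ω, Monotone fun k => κk k ω := by
    intro ω k l hkl
    exact integral_mono (M.int_of_bounded (hgkmeas k) (hgkb k) _)
      (M.int_of_bounded (hgkmeas l) (hgkb l) _) (fun ω' => hgkmono ω' hkl)
  have hκktend : ∀ ω : ℕ → E, Tendsto (fun k => κk k ω) atTop (nhds (κ ω)) := by
    intro ω
    exact integral_tendsto_of_tendsto_of_monotone
      (fun k => M.int_of_bounded (hgkmeas k) (hgkb k) _) (hint _)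
      (Eventually.of_forall fun ω' => hgkmono ω')
      (Eventually.of_forall fun ω' => hgktend ω')
  have hκaesm : AEStronglyMeasurable κ (M.P x) :=
    aestronglyMeasurable_of_tendsto_ae atTop hκkaesm (Eventually.of_forall hκktend)
  have hκknn : ∀ k ω, 0 ≤ κk k ω := fun k ω =>
    integral_nonneg fun ω' => le_min (h0 ω') (hgkpos k).le
  have hκnn : ∀ ω, 0 ≤ κ ω := fun ω => integral_nonneg h0
  have hgkθint : ∀ k, Integrable (fun ω => gk k (fun j => ω (m + j))) (M.P x) :=
    fun k => (integrable_const ((k:ℝ)+1)).mono'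
      ((hgkmeas k).comp (MarkovFamily.measurable_shift m)).aestronglyMeasurable
      (Eventually.of_forall fun ω => by rw [Real.norm_eq_abs]; exact hgkb k _)
  -- the per-truncation Markov identity
  have hmark : ∀ (k : ℕ) (A : Set (ℕ → E)), MeasurableSet[pathFiltration E m] A →
      ∫ ω in A, gk k (fun j => ω (m + j)) ∂(M.P x) = ∫ ω in A, κk k ω ∂(M.P x) :=
    fun k A hA => M.markov_scaled x m A hA (gk k) (hgkmeas k) (hgkpos k) (hgkb k)
  -- integrability of κ
  have hκint : Integrable κ (M.P x) := by
    refine ⟨hκaesm, ?_⟩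
    rw [hasFiniteIntegral_iff_norm]
    have hpt : ∀ ω, ENNReal.ofReal ‖κ ω‖ = ⨆ k, ENNReal.ofReal (κk k ω) := by
      intro ω
      rw [Real.norm_of_nonneg (hκnn ω)]
      refine tendsto_nhds_unique ?_ (tendsto_atTop_iSup
        (fun k l hkl => ENNReal.ofReal_le_ofReal (hκkmono ω hkl)))
      exact (ENNReal.continuous_ofReal.tendsto _).comp (hκktend ω)
    calc (∫⁻ ω, ENNReal.ofReal ‖κ ω‖ ∂(M.P x))
        = ∫⁻ ω, ⨆ k, ENNReal.ofReal (κk k ω) ∂(M.P x) := by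
          exact lintegral_congr fun ω => hpt ω
      _ = ⨆ k, ∫⁻ ω, ENNReal.ofReal (κk k ω) ∂(M.P x) :=
          lintegral_iSup' (fun k => ((hκkaesm k).aemeasurable).ennreal_ofReal)
            (Eventually.of_forall fun ω k l hkl => ENNReal.ofReal_le_ofReal (hκkmono ω hkl))
      _ = ⨆ k, ENNReal.ofReal (∫ ω, κk k ω ∂(M.P x)) := by
          refine iSup_congr fun k => ?_
          rw [ofReal_integral_eq_lintegral_ofReal (hκkint k)
            (Eventually.of_forall (hκknn k))]
      _ ≤ ENNReal.ofReal (∫ ω, g (fun j => ω (m + j)) ∂(M.P x)) := by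
          refine iSup_le fun k => ENNReal.ofReal_le_ofReal ?_
          have := (hmark k Set.univ MeasurableSet.univ)
          simp only [Measure.restrict_univ] at this
          rw [← this]
          exact integral_mono (hgkθint k) hintθ (fun ω => min_le_left _ _)
      _ < ⊤ := ENNReal.ofReal_lt_top
  refine ⟨hκint, fun A hA => ?_⟩
  -- limits on both sides
  have hL : Tendsto (fun k => ∫ ω in A, gk k (fun j => ω (m + j)) ∂(M.P x)) atTop
      (nhds (∫ ω in A, g (fun j => ω (m + j)) ∂(M.P x))) :=
    integral_tendsto_of_tendsto_of_monotone (fun k => (hgkθint k).restrict)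
      hintθ.restrict (Eventually.of_forall fun ω k l hkl => hgkmono _ hkl)
      (Eventually.of_forall fun ω => hgktend _)
  have hR : Tendsto (fun k => ∫ ω in A, κk k ω ∂(M.P x)) atTop
      (nhds (∫ ω in A, κ ω ∂(M.P x))) :=
    integral_tendsto_of_tendsto_of_monotone (fun k => (hκkint k).restrict)
      hκint.restrict (Eventually.of_forall fun ω k l hkl => hκkmono _ hkl)
      (Eventually.of_forall fun ω => hκktend _)
  have hseq : (fun k => ∫ ω in A, gk k (fun j => ω (m + j)) ∂(M.P x))
      = fun k => ∫ ω in A, κk k ω ∂(M.P x) := funext fun k => hmark k A hA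
  rw [hseq] at hL
  exact tendsto_nhds_unique hL hR

lemma MarkovFamily.markov_integrable (x : E) (m : ℕ) (g : (ℕ → E) → ℝ) (hg : Measurable g)
    (hint : ∀ y, Integrable g (M.P y))
    (hintθ : Integrable (fun ω => g (fun k => ω (m + k))) (M.P x)) :
    ∀ A : Set (ℕ → E), MeasurableSet[pathFiltration E m] A →
      ∫ ω in A, g (fun k => ω (m + k)) ∂(M.P x)
        = ∫ ω in A, (∫ ω', g ω' ∂(M.P (ω m))) ∂(M.P x) := by
  intro A hA
  set gp : (ℕ → E) → ℝ := fun ω => max (g ω) 0 with hgpdef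
  set gm : (ℕ → E) → ℝ := fun ω => max (-g ω) 0 with hgmdef
  have hgdecomp : ∀ ω, g ω = gp ω - gm ω := fun ω => by
    rw [hgpdef, hgmdef]; simp [max_zero_sub_max_neg_zero_eq_self]
  have hgpmeas : Measurable gp := hg.max measurable_const
  have hgmmeas : Measurable gm := hg.neg.max measurable_const
  have hgpint : ∀ y, Integrable gp (M.P y) := fun y => (hint y).pos_part
  have hgmint : ∀ y, Integrable gm (M.P y) := fun y => (hint y).neg.pos_part
  have hgpθ : Integrable (fun ω => gp (fun k => ω (m + k))) (M.P x) := hintθ.pos_part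
  have hgmθ : Integrable (fun ω => gm (fun k => ω (m + k))) (M.P x) := hintθ.neg.pos_part
  obtain ⟨hκpint, hκpeq⟩ := M.markov_nonneg x m gp hgpmeas (fun ω => le_max_right _ _)
    hgpint hgpθ
  obtain ⟨hκmint, hκmeq⟩ := M.markov_nonneg x m gm hgmmeas (fun ω => le_max_right _ _)
    hgmint hgmθ
  have hκdecomp : (fun ω : ℕ → E => ∫ ω', g ω' ∂(M.P (ω m)))
      = fun ω : ℕ → E => (∫ ω', gp ω' ∂(M.P (ω m))) - ∫ ω', gm ω' ∂(M.P (ω m)) := by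
    funext ω
    rw [← integral_sub (hgpint _) (hgmint _)]
    exact integral_congr_ae (Eventually.of_forall fun ω' => hgdecomp ω')
  have hθdecomp : (fun ω : ℕ → E => g (fun k => ω (m + k)))
      = fun ω : ℕ → E => gp (fun k => ω (m + k)) - gm (fun k => ω (m + k)) :=
    funext fun ω => hgdecomp _
  rw [hκdecomp, hθdecomp,
    integral_sub hgpθ.restrict hgmθ.restrict,
    integral_sub hκpint.restrict hκmint.restrict,
    hκpeq A hA, hκmeq A hA]

end AuxLemmas

/-- Suppose the process is not stopped before moment `n`, all players use the
equilibrium strategies `*σ_k^j` at moments `k = n+1,…,N`, players `j ≠ i` use `*σ_n^j` at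
moment `n`, and player `i` uses at moment `n` the strategy given by a stopping set
`Cⁱ ∈ B`, with expected payoff
`φ_{N−n}(X_{n−1}, Cⁱ) = E_{X_{n−1}}[f_i(X_n) 1_{ⁱ*D_n(D_n^i)} + v_{i,N−n}(X_n) 1_{(ⁱ*D_n(D_n^i))ᶜ}]`,
where `D_n^i = {X_n ∈ Cⁱ}`. Then `φ_{N−n}(X_{n−1}, ·)` attains its maximum over `Cⁱ ∈ B`
at `*C_n^i = {x : f_i(x) − v_{i,N−n}(x) ≥ 0}`, and `P_x`-a.e.
`v_{i,N−n+1}(X_{n−1}) = E_x[(f_i(X_n) − v_{i,N−n}(X_n))⁺ 1_{ⁱ*D_n(Ω)} | F_{n−1}]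
  − E_x[(f_i(X_n) − v_{i,N−n}(X_n))⁻ 1_{ⁱ*D_n(∅)} | F_{n−1}]
  + E_x[v_{i,N−n}(X_n) | F_{n−1}]`. -/

theorem finite_horizon_one_step {E : Type*} [MeasurableSpace E]
    (M : MarkovFamily E)
    (p : ℕ) (f : Fin p → E → ℝ)
    (hfmeas : ∀ i, Measurable (f i))
    (hfint : ∀ (i : Fin p) (x : E) (n : ℕ), Integrable (fun ω => f i (ω n)) (M.P x))
    (π : (Fin p → ℤ) → ℤ)
    (hπ01 : ∀ b : Fin p → ℤ, (∀ j, b j = 0 ∨ b j = 1) → π b = 0 ∨ π b = 1)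
    (hπmono : ∀ b c : Fin p → ℤ, (∀ j, b j = 0 ∨ b j = 1) → (∀ j, c j = 0 ∨ c j = 1) →
      (∀ j, b j ≤ c j) → π b ≤ π c)
    (hπ1 : π (fun _ => 1) = 1) (hπ0 : π (fun _ => 0) = 0)
    (N : ℕ) (hN : 1 ≤ N)
    (v : Fin p → ℕ → E → ℝ)
    (hvmeas : ∀ i n, Measurable (v i n))
    (hvint : ∀ (i : Fin p) (n : ℕ) (x : E) (m : ℕ),
      Integrable (fun ω => v i n (ω m)) (M.P x))
    (hv0 : ∀ i, v i 0 = f i)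
    (hvrec : ∀ (i : Fin p) (n : ℕ) (x : E), v i (n + 1) x =
      (∫ ω in aggEvent π (Function.update
          (fun j => {ω' : ℕ → E | v j n (ω' 1) ≤ f j (ω' 1)}) i (Set.univ : Set (ℕ → E))),
        max (f i (ω 1) - v i n (ω 1)) 0 ∂(M.P x))
      - (∫ ω in aggEvent π (Function.update
          (fun j => {ω' : ℕ → E | v j n (ω' 1) ≤ f j (ω' 1)}) i (∅ : Set (ℕ → E))),
        max (-(f i (ω 1) - v i n (ω 1))) 0 ∂(M.P x))
      + ∫ ω, v i n (ω 1) ∂(M.P x))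
    (i : Fin p) (n : ℕ) (hn1 : 1 ≤ n) (hnN : n ≤ N)
    (φ : E → Set E → ℝ)
    (hφ : ∀ (y : E) (Ci : Set E), φ y Ci =
      ∫ ω, (aggEvent π (Function.update
              (fun j => {ω' : ℕ → E | v j (N - n) (ω' 1) ≤ f j (ω' 1)}) i
              {ω' : ℕ → E | ω' 1 ∈ Ci})).indicator (fun ω' => f i (ω' 1)) ω
          + ((aggEvent π (Function.update
              (fun j => {ω' : ℕ → E | v j (N - n) (ω' 1) ≤ f j (ω' 1)}) i
              {ω' : ℕ → E | ω' 1 ∈ Ci}))ᶜ).indicator (fun ω' => v i (N - n) (ω' 1)) ω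
        ∂(M.P y)) :
    (∀ (y : E) (Ci : Set E), MeasurableSet Ci →
      φ y Ci ≤ φ y {z : E | 0 ≤ f i z - v i (N - n) z})
    ∧ ∀ x : E,
      (fun ω : ℕ → E => v i (N - n + 1) (ω (n - 1)))
        =ᵐ[M.P x]
      fun ω : ℕ → E =>
        ((M.P x)[fun ω' : ℕ → E =>
            (aggEvent π (Function.update
              (fun j => {ω'' : ℕ → E | v j (N - n) (ω'' n) ≤ f j (ω'' n)}) i
              (Set.univ : Set (ℕ → E)))).indicator
              (fun ω'' => max (f i (ω'' n) - v i (N - n) (ω'' n)) 0) ω'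
          | pathFiltration E (n - 1)]) ω
        - ((M.P x)[fun ω' : ℕ → E =>
            (aggEvent π (Function.update
              (fun j => {ω'' : ℕ → E | v j (N - n) (ω'' n) ≤ f j (ω'' n)}) i
              (∅ : Set (ℕ → E)))).indicator
              (fun ω'' => max (-(f i (ω'' n) - v i (N - n) (ω'' n))) 0) ω'
          | pathFiltration E (n - 1)]) ω
        + ((M.P x)[fun ω' : ℕ → E => v i (N - n) (ω' n)
          | pathFiltration E (n - 1)]) ω := by
  classical
  have hn' : n - 1 + 1 = n := Nat.succ_pred_eq_of_pos hn1
  set base1 : Fin p → Set (ℕ → E) :=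
    fun j => {ω' : ℕ → E | v j (N - n) (ω' 1) ≤ f j (ω' 1)} with hbase1
  have hbase1meas : ∀ j, MeasurableSet (base1 j) := fun j =>
    measurableSet_le ((hvmeas j (N - n)).comp (measurable_pi_apply 1))
      ((hfmeas j).comp (measurable_pi_apply 1))
  have hslot1meas : ∀ S : Set (ℕ → E), MeasurableSet S →
      ∀ j, MeasurableSet (Function.update base1 i S j) := by
    intro S hS j
    rcases eq_or_ne j i with rfl | hji
    · rw [Function.update_self]; exact hS
    · rw [Function.update_of_ne hji]; exact hbase1meas j
  have hind01 : ∀ (D : Fin p → Set (ℕ → E)) (ω : ℕ → E) (j : Fin p),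
      (D j).indicator (1 : (ℕ → E) → ℤ) ω = 0 ∨ (D j).indicator (1 : (ℕ → E) → ℤ) ω = 1 := by
    intro D ω j
    by_cases h : ω ∈ D j
    · right; simp [Set.indicator_of_mem h]
    · left; simp [Set.indicator_of_notMem h]
  have hkey : ∀ (S1 S2 : Set (ℕ → E)) (ω : ℕ → E), (ω ∈ S1 → ω ∈ S2) →
      ω ∈ aggEvent π (Function.update base1 i S1) →
      ω ∈ aggEvent π (Function.update base1 i S2) := by
    intro S1 S2 ω hS hmem
    have hle : ∀ j, (Function.update base1 i S1 j).indicator (1 : (ℕ → E) → ℤ) ω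
        ≤ (Function.update base1 i S2 j).indicator (1 : (ℕ → E) → ℤ) ω := by
      intro j
      rcases eq_or_ne j i with rfl | hji
      · rw [Function.update_self, Function.update_self]
        by_cases h1 : ω ∈ S1
        · rw [Set.indicator_of_mem h1, Set.indicator_of_mem (hS h1)]
        · rw [Set.indicator_of_notMem h1]
          exact Set.indicator_apply_nonneg fun _ => by norm_num
      · rw [Function.update_of_ne hji, Function.update_of_ne hji]
    have hmono := hπmono _ _ (hind01 (Function.update base1 i S1) ω)
      (hind01 (Function.update base1 i S2) ω) hle
    have hm1 : π (fun j => (Function.update base1 i S1 j).indicator 1 ω) = 1 := hmem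
    rcases hπ01 (fun j => (Function.update base1 i S2 j).indicator 1 ω)
      (hind01 (Function.update base1 i S2) ω) with h0 | h1
    · exfalso; rw [hm1, h0] at hmono; omega
    · exact h1
  constructor
  · -- Part 1 : optimality of the stopping set
    intro y Ci hCi
    haveI := M.prob y
    have hCs : MeasurableSet {z : E | 0 ≤ f i z - v i (N - n) z} :=
      measurableSet_le measurable_const ((hfmeas i).sub (hvmeas i (N - n)))
    rw [hφ y Ci, hφ y {z : E | 0 ≤ f i z - v i (N - n) z}]
    have hSCimeas : MeasurableSet {ω' : ℕ → E | ω' 1 ∈ Ci} := (measurable_pi_apply 1) hCi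
    have hSCsmeas : MeasurableSet
        {ω' : ℕ → E | ω' 1 ∈ {z : E | 0 ≤ f i z - v i (N - n) z}} :=
      (measurable_pi_apply 1) hCs
    set AC := aggEvent π (Function.update base1 i {ω' : ℕ → E | ω' 1 ∈ Ci}) with hACdef
    set AS := aggEvent π (Function.update base1 i
      {ω' : ℕ → E | ω' 1 ∈ {z : E | 0 ≤ f i z - v i (N - n) z}}) with hASdef
    have hACmeas : MeasurableSet AC := measurableSet_aggEvent π (hslot1meas _ hSCimeas)
    have hASmeas : MeasurableSet AS := measurableSet_aggEvent π (hslot1meas _ hSCsmeas)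
    have hintC : Integrable (fun ω => AC.indicator (fun ω' => f i (ω' 1)) ω
        + ACᶜ.indicator (fun ω' => v i (N - n) (ω' 1)) ω) (M.P y) :=
      ((hfint i y 1).indicator hACmeas).add ((hvint i (N - n) y 1).indicator hACmeas.compl)
    have hintS : Integrable (fun ω => AS.indicator (fun ω' => f i (ω' 1)) ω
        + ASᶜ.indicator (fun ω' => v i (N - n) (ω' 1)) ω) (M.P y) :=
      ((hfint i y 1).indicator hASmeas).add ((hvint i (N - n) y 1).indicator hASmeas.compl)
    refine integral_mono hintC hintS ?_
    intro ω
    simp only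
    by_cases hfv : v i (N - n) (ω 1) ≤ f i (ω 1)
    · by_cases h1 : ω ∈ AC
      · have h2 : ω ∈ AS := hkey _ _ ω
          (fun _ => by simpa [Set.mem_setOf_eq, sub_nonneg] using hfv) h1
        rw [Set.indicator_of_mem h1, Set.indicator_of_mem h2,
          Set.indicator_of_notMem (Set.notMem_compl_iff.mpr h1),
          Set.indicator_of_notMem (Set.notMem_compl_iff.mpr h2)]
      · by_cases h2 : ω ∈ AS
        · rw [Set.indicator_of_notMem h1, Set.indicator_of_mem h2,
            Set.indicator_of_mem (Set.mem_compl h1),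
            Set.indicator_of_notMem (Set.notMem_compl_iff.mpr h2)]
          simpa using hfv
        · rw [Set.indicator_of_notMem h1, Set.indicator_of_notMem h2,
            Set.indicator_of_mem (Set.mem_compl h1),
            Set.indicator_of_mem (Set.mem_compl h2)]
    · by_cases h2 : ω ∈ AS
      · have h1 : ω ∈ AC := hkey _ _ ω
          (fun hm => absurd (by simpa [Set.mem_setOf_eq, sub_nonneg] using hm) hfv) h2
        rw [Set.indicator_of_mem h1, Set.indicator_of_mem h2,
          Set.indicator_of_notMem (Set.notMem_compl_iff.mpr h1),
          Set.indicator_of_notMem (Set.notMem_compl_iff.mpr h2)]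
      · by_cases h1 : ω ∈ AC
        · rw [Set.indicator_of_mem h1, Set.indicator_of_notMem h2,
            Set.indicator_of_notMem (Set.notMem_compl_iff.mpr h1),
            Set.indicator_of_mem (Set.mem_compl h2)]
          have := le_of_not_ge hfv
          linarith
        · rw [Set.indicator_of_notMem h1, Set.indicator_of_notMem h2,
            Set.indicator_of_mem (Set.mem_compl h1),
            Set.indicator_of_mem (Set.mem_compl h2)]
  · -- Part 2 : the value recursion as a conditional expectation
    intro x
    haveI := M.prob x
    have hmle : pathFiltration E (n - 1) ≤ (inferInstance : MeasurableSpace (ℕ → E)) :=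
      pathFiltration_le _
    haveI : IsFiniteMeasure ((M.P x).trim hmle) := isFiniteMeasure_trim hmle
    set basen : Fin p → Set (ℕ → E) :=
      fun j => {ω'' : ℕ → E | v j (N - n) (ω'' n) ≤ f j (ω'' n)} with hbasen
    set Dun := aggEvent π (Function.update basen i (Set.univ : Set (ℕ → E))) with hDundef
    set Den := aggEvent π (Function.update basen i (∅ : Set (ℕ → E))) with hDendef
    set T1 : (ℕ → E) → ℝ :=
      fun ω' : ℕ → E => Dun.indicator
        (fun ω'' => max (f i (ω'' n) - v i (N - n) (ω'' n)) 0) ω' with hT1def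
    set T2 : (ℕ → E) → ℝ :=
      fun ω' : ℕ → E => Den.indicator
        (fun ω'' => max (-(f i (ω'' n) - v i (N - n) (ω'' n))) 0) ω' with hT2def
    set T3 : (ℕ → E) → ℝ := fun ω' : ℕ → E => v i (N - n) (ω' n) with hT3def
    have hbasenmeas : ∀ j, MeasurableSet (basen j) := fun j =>
      measurableSet_le ((hvmeas j (N - n)).comp (measurable_pi_apply n))
        ((hfmeas j).comp (measurable_pi_apply n))
    have hslotn : ∀ S : Set (ℕ → E), MeasurableSet S →
        ∀ j, MeasurableSet (Function.update basen i S j) := by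
      intro S hS j
      rcases eq_or_ne j i with rfl | hji
      · rw [Function.update_self]; exact hS
      · rw [Function.update_of_ne hji]; exact hbasenmeas j
    have hDunm : MeasurableSet Dun := measurableSet_aggEvent π (hslotn _ MeasurableSet.univ)
    have hDenm : MeasurableSet Den :=
      measurableSet_aggEvent π (hslotn _ MeasurableSet.empty)
    have hT1int : Integrable T1 (M.P x) :=
      (((hfint i x n).sub (hvint i (N - n) x n)).pos_part).indicator hDunm
    have hT2int : Integrable T2 (M.P x) :=
      ((((hfint i x n).sub (hvint i (N - n) x n)).neg).pos_part).indicator hDenm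
    have hT3int : Integrable T3 (M.P x) := hvint i (N - n) x n
    -- the one-step payoff function `G` read off at time 1
    set Du1 := aggEvent π (Function.update base1 i (Set.univ : Set (ℕ → E))) with hDu1def
    set De1 := aggEvent π (Function.update base1 i (∅ : Set (ℕ → E))) with hDe1def
    have hDu1m : MeasurableSet Du1 :=
      measurableSet_aggEvent π (hslot1meas _ MeasurableSet.univ)
    have hDe1m : MeasurableSet De1 :=
      measurableSet_aggEvent π (hslot1meas _ MeasurableSet.empty)
    set G : (ℕ → E) → ℝ := fun ω' : ℕ → E =>
      Du1.indicator (fun ω'' => max (f i (ω'' 1) - v i (N - n) (ω'' 1)) 0) ω'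
      - De1.indicator (fun ω'' => max (-(f i (ω'' 1) - v i (N - n) (ω'' 1))) 0) ω'
      + v i (N - n) (ω' 1) with hGdef
    have hq1int : ∀ y, Integrable
        (fun ω' : ℕ → E => max (f i (ω' 1) - v i (N - n) (ω' 1)) 0) (M.P y) :=
      fun y => ((hfint i y 1).sub (hvint i (N - n) y 1)).pos_part
    have hq2int : ∀ y, Integrable
        (fun ω' : ℕ → E => max (-(f i (ω' 1) - v i (N - n) (ω' 1))) 0) (M.P y) :=
      fun y => (((hfint i y 1).sub (hvint i (N - n) y 1)).neg).pos_part
    have hGint : ∀ y, Integrable G (M.P y) := fun y =>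
      (((hq1int y).indicator hDu1m).sub ((hq2int y).indicator hDe1m)).add
        (hvint i (N - n) y 1)
    have hGmeas : Measurable G := by
      have m1 : Measurable (fun ω' : ℕ → E => max (f i (ω' 1) - v i (N - n) (ω' 1)) 0) :=
        (((hfmeas i).comp (measurable_pi_apply 1)).sub
          ((hvmeas i (N - n)).comp (measurable_pi_apply 1))).max measurable_const
      have m2 : Measurable
          (fun ω' : ℕ → E => max (-(f i (ω' 1) - v i (N - n) (ω' 1))) 0) :=
        ((((hfmeas i).comp (measurable_pi_apply 1)).sub
          ((hvmeas i (N - n)).comp (measurable_pi_apply 1))).neg).max measurable_const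
      exact ((m1.indicator hDu1m).sub (m2.indicator hDe1m)).add
        ((hvmeas i (N - n)).comp (measurable_pi_apply 1))
    have hvG : ∀ y : E, v i (N - n + 1) y = ∫ ω', G ω' ∂(M.P y) := by
      intro y
      have hsub' : Integrable (fun ω' : ℕ → E =>
          Du1.indicator (fun ω'' => max (f i (ω'' 1) - v i (N - n) (ω'' 1)) 0) ω'
          - De1.indicator (fun ω'' => max (-(f i (ω'' 1) - v i (N - n) (ω'' 1))) 0) ω')
          (M.P y) := ((hq1int y).indicator hDu1m).sub ((hq2int y).indicator hDe1m)
      rw [hvrec i (N - n) y, ← hDu1def, ← hDe1def,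
        ← integral_indicator hDu1m, ← integral_indicator hDe1m, hGdef]
      rw [integral_add hsub' (hvint i (N - n) y 1),
        integral_sub ((hq1int y).indicator hDu1m) ((hq2int y).indicator hDe1m)]
    -- `G` after the shift by `n-1` is exactly `T1 - T2 + T3`
    have hGθ : (fun ω : ℕ → E => G (fun k => ω (n - 1 + k)))
        = fun ω : ℕ → E => T1 ω - T2 ω + T3 ω := by
      funext ω
      have hθ1 : (fun k => ω (n - 1 + k)) 1 = ω n := by
        show ω (n - 1 + 1) = ω n; rw [hn']
      have hbeq : ∀ j, ((fun k => ω (n - 1 + k)) ∈ base1 j) ↔ (ω ∈ basen j) := by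
        intro j
        rw [hbase1, hbasen]
        simp only [Set.mem_setOf_eq, hθ1]
      have hargu : (fun j => ((Function.update base1 i (Set.univ : Set (ℕ → E))) j).indicator
            (1 : (ℕ → E) → ℤ) (fun k => ω (n - 1 + k)))
          = fun j => ((Function.update basen i (Set.univ : Set (ℕ → E))) j).indicator
            (1 : (ℕ → E) → ℤ) ω := by
        funext j
        rcases eq_or_ne j i with rfl | hji
        · rw [Function.update_self, Function.update_self]
          simp only [Set.indicator_univ, Set.indicator_empty]
          try rfl
        · rw [Function.update_of_ne hji, Function.update_of_ne hji]
          by_cases hbj : ω ∈ basen j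
          · rw [Set.indicator_of_mem ((hbeq j).mpr hbj), Set.indicator_of_mem hbj]
            rfl
          · rw [Set.indicator_of_notMem (fun h => hbj ((hbeq j).mp h)),
              Set.indicator_of_notMem hbj]
      have hiu : ((fun k => ω (n - 1 + k)) ∈ Du1) ↔ (ω ∈ Dun) := by
        rw [hDu1def, hDundef]
        show π _ = 1 ↔ π _ = 1
        rw [hargu]
      have harge : (fun j => ((Function.update base1 i (∅ : Set (ℕ → E))) j).indicator
            (1 : (ℕ → E) → ℤ) (fun k => ω (n - 1 + k)))
          = fun j => ((Function.update basen i (∅ : Set (ℕ → E))) j).indicator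
            (1 : (ℕ → E) → ℤ) ω := by
        funext j
        rcases eq_or_ne j i with rfl | hji
        · rw [Function.update_self, Function.update_self]
          simp only [Set.indicator_univ, Set.indicator_empty]
          try rfl
        · rw [Function.update_of_ne hji, Function.update_of_ne hji]
          by_cases hbj : ω ∈ basen j
          · rw [Set.indicator_of_mem ((hbeq j).mpr hbj), Set.indicator_of_mem hbj]
            rfl
          · rw [Set.indicator_of_notMem (fun h => hbj ((hbeq j).mp h)),
              Set.indicator_of_notMem hbj]
      have hie : ((fun k => ω (n - 1 + k)) ∈ De1) ↔ (ω ∈ Den) := by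
        rw [hDe1def, hDendef]
        show π _ = 1 ↔ π _ = 1
        rw [harge]
      rw [hGdef, hT1def, hT2def, hT3def]
      simp only [Set.indicator_apply, hiu, hie, hθ1]
    have hGθint : Integrable (fun ω => G (fun k => ω (n - 1 + k))) (M.P x) := by
      rw [hGθ]; exact (hT1int.sub hT2int).add hT3int
    have hmark := M.markov_integrable x (n - 1) G hGmeas hGint hGθint
    have hkey2 : (fun ω : ℕ → E => v i (N - n + 1) (ω (n - 1)))
        =ᵐ[M.P x] (M.P x)[(fun ω => T1 ω - T2 ω + T3 ω) | pathFiltration E (n - 1)] := by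
      refine ae_eq_condExp_of_forall_setIntegral_eq hmle
        ((hT1int.sub hT2int).add hT3int)
        (fun s _ _ => (hvint i (N - n + 1) x (n - 1)).integrableOn)
        (fun s hs _ => ?_) ?_
      · have h1 := hmark s hs
        rw [hGθ] at h1
        have h2 : (fun ω : ℕ → E => v i (N - n + 1) (ω (n - 1)))
            = fun ω : ℕ → E => ∫ ω', G ω' ∂(M.P (ω (n - 1))) :=
          funext fun ω => hvG _
        rw [h2, ← h1]
      · have hmeasF : Measurable[pathFiltration E (n - 1)]
            (fun ω : ℕ → E => v i (N - n + 1) (ω (n - 1))) :=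
          (hvmeas i (N - n + 1)).comp (measurable_coord_pathFiltration le_rfl)
        exact ⟨_, hmeasF.stronglyMeasurable, EventuallyEq.rfl⟩
    have hsplit : (M.P x)[(fun ω => T1 ω - T2 ω + T3 ω) | pathFiltration E (n - 1)]
        =ᵐ[M.P x] fun ω => ((M.P x)[T1 | pathFiltration E (n - 1)]) ω
          - ((M.P x)[T2 | pathFiltration E (n - 1)]) ω
          + ((M.P x)[T3 | pathFiltration E (n - 1)]) ω := by
      have h1 : (fun ω => T1 ω - T2 ω + T3 ω) = (T1 - T2) + T3 := rfl
      rw [h1]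
      filter_upwards [condExp_add (hT1int.sub hT2int) hT3int _,
        condExp_sub hT1int hT2int _] with ω hω1 hω2
      rw [hω1, Pi.add_apply, hω2, Pi.sub_apply]
    exact hkey2.trans hsplit
end
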